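/- arXiv:1905.10716 — 8 statements merged into one kernel-verified Lean document; each statement's English description precedes it below -/
import Mathlib

section
/- For nonzero points a, b ∈ ℝ² and β > 1, the origin O is contained in the β-influence region S_β(a,b) if and only if both ⟨a,b⟩ ≤ (1/(2k))‖a‖² and ‖b - ka‖² ≥ (k‖a‖)², where k = β/(2(β-1)). Equivalently, O ∈ S_β(a,b) iff b lies in the closed halfspace H_o(p) = {x : ⟨a,x⟩ ≤ (1/(2k))‖a‖²} but not in the interior of the ball B(ka, k‖a‖). -/
/-!
Expanding the squared norms gives
`‖t • a + (1 - t) • b‖² - (t ‖a - b‖)² = 2t ⟪a, b⟫ + (1 - 2t) ‖b‖²`: the terms in `‖a‖²` cancel.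
With `t = β / 2`, the ball around `c_b` contains the origin iff `⟪a, b⟫ ≤ ‖a‖² / (2k)`, the
halfspace condition, and the ball around `c_a` iff `⟪a, b⟫ ≤ ‖b‖² / (2k)`. The latter is exactly
`‖b - k a‖² ≥ (k ‖a‖)²`, since the `k² ‖a‖²` terms cancel in the same way.
-/

open scoped RealInnerProductSpace

section InnerProductSpace

variable {E : Type*} [NormedAddCommGroup E] [InnerProductSpace ℝ E]

lemma norm_smul_add_one_sub_smul_sq_sub_sq (a b : E) (t : ℝ) :
    ‖t • a + (1 - t) • b‖ ^ 2 - (t * ‖a - b‖) ^ 2 = 2 * t * ⟪a, b⟫ + (1 - 2 * t) * ‖b‖ ^ 2 := by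
  simp only [norm_add_sq_real, mul_pow, norm_sub_sq_real, real_inner_smul_left,
    real_inner_smul_right, norm_smul, Real.norm_eq_abs, sq_abs]
  ring

lemma zero_mem_closedBall_smul_add_one_sub_smul_iff {t : ℝ} (ht : 0 < t) (a b : E) :
    (0 : E) ∈ Metric.closedBall (t • a + (1 - t) • b) (t * ‖a - b‖) ↔
      ⟪a, b⟫ ≤ (2 * t - 1) / (2 * t) * ‖b‖ ^ 2 := by
  have key := norm_smul_add_one_sub_smul_sq_sub_sq a b t
  rw [Metric.mem_closedBall, dist_zero_left,
    ← sq_le_sq₀ (norm_nonneg _) (by positivity), div_mul_eq_mul_div, le_div_iff₀ (by positivity)]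
  constructor <;> intro h <;> linarith

lemma sq_le_norm_sub_smul_sq_iff {k : ℝ} (hk : 0 < k) (a b : E) :
    (k * ‖a‖) ^ 2 ≤ ‖b - k • a‖ ^ 2 ↔ ⟪a, b⟫ ≤ 1 / (2 * k) * ‖b‖ ^ 2 := by
  rw [norm_sub_sq_real, real_inner_smul_right, norm_smul, Real.norm_eq_abs, abs_of_pos hk,
    real_inner_comm, one_div_mul_eq_div, le_div_iff₀ (by positivity)]
  constructor <;> intro h <;> linarith

end InnerProductSpace

theorem origin_mem_beta_influence_iff_general
    (β : ℝ) (hβ : 1 < β) (a b : EuclideanSpace ℝ (Fin 2))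
    (k : ℝ) (hk : k = β / (2 * (β - 1))) :
    (0 : EuclideanSpace ℝ (Fin 2)) ∈
        Metric.closedBall ((β/2) • a + (1 - β/2) • b) ((β/2) * ‖a - b‖) ∩
        Metric.closedBall ((β/2) • b + (1 - β/2) • a) ((β/2) * ‖a - b‖) ↔
      (⟪a, b⟫ ≤ (1 / (2 * k)) * ‖a‖ ^ 2 ∧ ‖b - k • a‖ ^ 2 ≥ (k * ‖a‖) ^ 2) := by
  have hβ_half : 0 < β / 2 := by positivity
  have hk_pos : 0 < k := by rw [hk]; exact div_pos (by positivity) (by linarith)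
  have hcoeff : (2 * (β / 2) - 1) / (2 * (β / 2)) = 1 / (2 * k) := by
    rw [hk]; field_simp
  rw [Set.mem_inter_iff, zero_mem_closedBall_smul_add_one_sub_smul_iff hβ_half, norm_sub_rev,
    zero_mem_closedBall_smul_add_one_sub_smul_iff hβ_half, ge_iff_le,
    sq_le_norm_sub_smul_sq_iff hk_pos, hcoeff, real_inner_comm b a, and_comm]

theorem origin_mem_beta_influence_iff
    (β : ℝ) (hβ : 1 < β) (a b : EuclideanSpace ℝ (Fin 2))
    (ha : a ≠ 0) (hb : b ≠ 0) (k : ℝ) (hk : k = β / (2 * (β - 1))) :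
    (0 : EuclideanSpace ℝ (Fin 2)) ∈
        Metric.closedBall ((β/2) • a + (1 - β/2) • b) ((β/2) * ‖a - b‖) ∩
        Metric.closedBall ((β/2) • b + (1 - β/2) • a) ((β/2) * ‖a - b‖) ↔
      (⟪a, b⟫ ≤ (1 / (2 * k)) * ‖a‖ ^ 2 ∧ ‖b - k • a‖ ^ 2 ≥ (k * ‖a‖) ^ 2) :=
  origin_mem_beta_influence_iff_general β hβ a b k hk
end

section
/- For 1 ≤ β < β', a finite data set S ⊂ ℝ² of points, and a query point q ∈ ℝ², the β'-skeleton depth of q with respect to S is at least the β-skeleton depth: SkD_{β'}(q;S) ≥ SkD_β(q;S). -/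
/-!
The disc `B(c_i, r)` of `S_β(x_i, x_j)` has `x_j` on its boundary, and as `β` grows its centre moves
away from `x_j` along the ray towards `x_i` exactly as fast as its radius grows. So the discs, hence
the lunes `S_β(x_i, x_j)`, increase with `β`, and every pair counted for `β` is counted for `β'`.
-/

open scoped Classical

/-- The β-influence region of two points in the plane. -/
noncomputable def betaInfluence (β : ℝ) (a b : EuclideanSpace ℝ (Fin 2)) :
    Set (EuclideanSpace ℝ (Fin 2)) :=
  Metric.closedBall ((β/2) • a + (1 - β/2) • b) ((β/2) * ‖a - b‖) ∩
    Metric.closedBall ((β/2) • b + (1 - β/2) • a) ((β/2) * ‖a - b‖)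

/-- The unnormalized β-skeleton depth: the number of (unordered) pairs of data
points whose β-influence region contains the query point. -/
noncomputable def skeletonDepth (β : ℝ) (q : EuclideanSpace ℝ (Fin 2))
    (S : Finset (EuclideanSpace ℝ (Fin 2))) : ℕ :=
  ((S.powersetCard 2).filter
    (fun P => ∃ x ∈ P, ∃ y ∈ P, x ≠ y ∧ q ∈ betaInfluence β x y)).card

theorem monotone_closedBall_smul_add_one_sub_smul {E : Type*} [SeminormedAddCommGroup E]
    [NormedSpace ℝ E] (x y : E) :
    Monotone fun t : ℝ => Metric.closedBall (t • x + (1 - t) • y) (t * ‖x - y‖) := by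
  intro t t' htt'
  refine Metric.closedBall_subset_closedBall' ?_
  have hcentres : dist (t • x + (1 - t) • y) (t' • x + (1 - t') • y) = (t' - t) * ‖x - y‖ := by
    rw [dist_eq_norm,
      show t • x + (1 - t) • y - (t' • x + (1 - t') • y) = (t - t') • (x - y) by module,
      norm_smul, Real.norm_of_nonpos (by linarith)]
    ring
  linarith

theorem betaInfluence_mono (a b : EuclideanSpace ℝ (Fin 2)) :
    Monotone fun β => betaInfluence β a b := by
  intro β β' hββ'
  have hhalf : β / 2 ≤ β' / 2 := by linarith
  refine Set.inter_subset_inter (monotone_closedBall_smul_add_one_sub_smul a b hhalf) ?_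
  simpa only [norm_sub_rev a b] using monotone_closedBall_smul_add_one_sub_smul b a hhalf

theorem skeletonDepth_mono (q : EuclideanSpace ℝ (Fin 2))
    (S : Finset (EuclideanSpace ℝ (Fin 2))) :
    Monotone fun β => skeletonDepth β q S := by
  intro β β' hββ'
  refine Finset.card_le_card (Finset.monotone_filter_right _ fun P _ ↦ ?_)
  rintro ⟨x, hx, y, hy, hxy, hq⟩
  exact ⟨x, hx, y, hy, hxy, betaInfluence_mono x y hββ' hq⟩

theorem skeletonDepth_monotone_general (β β' : ℝ) (hββ' : β < β')
    (S : Finset (EuclideanSpace ℝ (Fin 2))) (q : EuclideanSpace ℝ (Fin 2)) :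
    skeletonDepth β q S ≤ skeletonDepth β' q S :=
  skeletonDepth_mono q S hββ'.le

theorem skeletonDepth_monotone (β β' : ℝ) (hβ : 1 ≤ β) (hββ' : β < β')
    (S : Finset (EuclideanSpace ℝ (Fin 2))) (q : EuclideanSpace ℝ (Fin 2)) :
    skeletonDepth β q S ≤ skeletonDepth β' q S :=
  skeletonDepth_monotone_general β β' hββ' S q
end

section
/- Let a, b, c ∈ ℝ² and suppose q lies in the closed triangle (convex hull) of {a, b, c}. Then q lies in at least one of the three closed disks with diameters ab, ac, bc. -/
/-! Write `q` as a convex combination `∑ wᵢ xᵢ` of the vertices and put `yᵢ = xᵢ - q`, so that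
`∑ wᵢ yᵢ = 0`. If every two distinct `yᵢ` had positive inner product, then every term of
`0 = ‖∑ wᵢ yᵢ‖² = ∑ᵢ ∑ⱼ wᵢ wⱼ ⟪yᵢ, yⱼ⟫` would be nonnegative, hence zero; for a vertex of positive
weight the diagonal term forces `yᵢ = 0`, i.e. `q = xᵢ`, which has inner product `0` with every
other `yⱼ`. -/

open scoped RealInnerProductSpace

open Finset

variable {E ι : Type*} [NormedAddCommGroup E] [InnerProductSpace ℝ E]

theorem eq_zero_of_sum_smul_eq_zero_of_inner_nonneg {s : Finset ι} {w : ι → ℝ} {y : ι → E}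
    (hw : ∀ i ∈ s, 0 ≤ w i) (hy : ∀ i ∈ s, ∀ j ∈ s, i ≠ j → 0 ≤ ⟪y i, y j⟫)
    (hsum : ∑ i ∈ s, w i • y i = 0) {i : ι} (hi : i ∈ s) (hwi : w i ≠ 0) : y i = 0 := by
  have hexpand : ∑ i ∈ s, ∑ j ∈ s, w j * w i * ⟪y i, y j⟫ = 0 := by
    have hself : ⟪∑ i ∈ s, w i • y i, ∑ j ∈ s, w j • y j⟫ = 0 := by rw [hsum, inner_zero_left]
    rw [sum_inner] at hself
    simpa only [real_inner_smul_left, inner_sum, real_inner_smul_right, mul_sum, mul_assoc]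
      using hself
  have hterm : ∀ i ∈ s, ∀ j ∈ s, 0 ≤ w j * w i * ⟪y i, y j⟫ := by
    intro i hi j hj
    obtain rfl | hij := eq_or_ne i j
    · exact mul_nonneg (mul_self_nonneg _) real_inner_self_nonneg
    · exact mul_nonneg (mul_nonneg (hw j hj) (hw i hi)) (hy i hi j hj hij)
  have hii : w i * w i * ⟪y i, y i⟫ = 0 := by
    rw [sum_eq_zero_iff_of_nonneg fun i hi => sum_nonneg (hterm i hi)] at hexpand
    exact (sum_eq_zero_iff_of_nonneg (hterm i hi)).1 (hexpand i hi) i hi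
  simpa [hwi] using hii

theorem exists_inner_sub_nonpos_of_mem_convexHull_range [Nontrivial ι] {x : ι → E} {q : E}
    (hq : q ∈ convexHull ℝ (Set.range x)) : ∃ i j, i ≠ j ∧ ⟪x i - q, x j - q⟫ ≤ 0 := by
  rw [convexHull_range_eq_exists_affineCombination] at hq
  obtain ⟨s, w, hw, hw₁, hq⟩ := hq
  rw [s.affineCombination_eq_linear_combination x w hw₁] at hq
  have hsum : ∑ i ∈ s, w i • (x i - q) = 0 := by
    simp only [smul_sub, sum_sub_distrib, ← sum_smul, hw₁, one_smul, hq, sub_self]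
  obtain ⟨i, hi, hwi⟩ := exists_ne_zero_of_sum_ne_zero (hw₁ ▸ one_ne_zero : ∑ i ∈ s, w i ≠ 0)
  obtain ⟨j, hji⟩ := exists_ne i
  by_contra! hpos
  have hxi : x i - q = 0 := eq_zero_of_sum_smul_eq_zero_of_inner_nonneg hw
    (fun i _ j _ hij => (hpos i j hij).le) hsum hi hwi
  simpa [hxi] using hpos i j hji.symm

theorem triangle_covered_by_diameter_disks
    (a b c q : EuclideanSpace ℝ (Fin 2))
    (hq : q ∈ convexHull ℝ {a, b, c}) :
    ⟪a - q, b - q⟫ ≤ 0 ∨ ⟪a - q, c - q⟫ ≤ 0 ∨ ⟪b - q, c - q⟫ ≤ 0 := by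
  have hq' : q ∈ convexHull ℝ (Set.range ![a, b, c]) := by
    rwa [Matrix.range_cons, Matrix.range_cons_cons_empty, Set.singleton_union]
  obtain ⟨i, j, hij, hle⟩ := exists_inner_sub_nonpos_of_mem_convexHull_range hq'
  fin_cases i <;> fin_cases j <;> simp_all [real_inner_comm]
end

section
/- Let a, b, c ∈ ℝ² and suppose q lies in the closed triangle (convex hull) of {a, b, c}. Then q lies in at least two of the three closed disks with diameters ab, ac, bc. -/
open scoped RealInnerProductSpace

section

variable {E : Type*} [NormedAddCommGroup E] [InnerProductSpace ℝ E]

/-- The open half-space `{p | 0 < ⟪u, p - q⟫}` is convex and misses `q`, so it cannot contain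
a set whose convex hull contains `q`. -/
theorem exists_inner_sub_nonpos_of_mem_convexHull {s : Set E} {q : E}
    (hq : q ∈ convexHull ℝ s) (u : E) : ∃ p ∈ s, ⟪u, p - q⟫ ≤ 0 := by
  by_contra! h
  have hconv : Convex ℝ {p : E | ⟪u, q⟫ < ⟪u, p⟫} :=
    convex_halfSpace_gt (innerₗ E u).isLinear _
  have hs : s ⊆ {p : E | ⟪u, q⟫ < ⟪u, p⟫} := fun p hp => by
    simpa [inner_sub_right] using h p hp
  exact lt_irrefl ⟪u, q⟫ (convexHull_min hs hconv hq)

theorem inner_sub_nonpos_or_inner_sub_nonpos_of_mem_convexHull {a b c q : E}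
    (hq : q ∈ convexHull ℝ {a, b, c}) : ⟪a - q, b - q⟫ ≤ 0 ∨ ⟪a - q, c - q⟫ ≤ 0 := by
  obtain ⟨p, hp, hpq⟩ := exists_inner_sub_nonpos_of_mem_convexHull hq (a - q)
  rcases hp with rfl | rfl | rfl
  · have : p - q = 0 := by simpa using le_antisymm hpq real_inner_self_nonneg
    simp [this]
  · exact Or.inl hpq
  · exact Or.inr hpq

end

theorem triangle_point_in_two_diameter_disks
    (a b c q : EuclideanSpace ℝ (Fin 2))
    (hq : q ∈ convexHull ℝ {a, b, c}) :
    (⟪a - q, b - q⟫ ≤ 0 ∧ ⟪a - q, c - q⟫ ≤ 0) ∨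
      (⟪a - q, b - q⟫ ≤ 0 ∧ ⟪b - q, c - q⟫ ≤ 0) ∨
      (⟪a - q, c - q⟫ ≤ 0 ∧ ⟪b - q, c - q⟫ ≤ 0) := by
  have ha := inner_sub_nonpos_or_inner_sub_nonpos_of_mem_convexHull hq
  have hb := inner_sub_nonpos_or_inner_sub_nonpos_of_mem_convexHull
    (Set.insert_comm a b {c} ▸ hq)
  have hc := inner_sub_nonpos_or_inner_sub_nonpos_of_mem_convexHull
    (show q ∈ convexHull ℝ {c, a, b} by rwa [Set.insert_comm c, Set.pair_comm c])
  rw [real_inner_comm (a - q)] at hb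
  rw [real_inner_comm (a - q), real_inner_comm (b - q)] at hc
  tauto
end

section
/- Fix β > 1 and let q ∈ ℝ², and let x_i, x_j ∈ ℝ² with x_i ≠ x_j. If q lies strictly inside the slab S_∞(x_i,x_j) (i.e., 0 < ⟨q - x_i, x_j - x_i⟩ < ‖x_j - x_i‖² ) and q is not on segment x_ix_j, then there exists β₀ < ∞ such that for all β ≥ β₀, q ∈ S_β(x_i, x_j). -/
open scoped RealInnerProductSpace
open Filter

/-!
Each ball `B(c_i, r)` has `x_j` on its boundary, and expanding the square of the distance to its
centre the terms quadratic in `β` cancel: `q ∈ B(c_i, r)` iff `‖q - x_j‖² ≤ β ⟪q - x_j, x_i - x_j⟫`.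
So as `β → ∞` the ball exhausts the open half-plane `⟪q - x_j, x_i - x_j⟫ > 0`, and the open slab
is the intersection of the two half-planes.
-/

section InnerProductSpace

variable {E : Type*} [NormedAddCommGroup E] [InnerProductSpace ℝ E]

theorem inner_sub_sub_add_inner_sub_sub (q x y : E) :
    ⟪q - x, y - x⟫ + ⟪q - y, x - y⟫ = ‖y - x‖ ^ 2 := by
  have hqy : q - y = (q - x) - (y - x) := by abel
  have hxy : x - y = -(y - x) := by abel
  rw [hqy, hxy, inner_neg_right, inner_sub_left (q - x), real_inner_self_eq_norm_sq]
  ring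

theorem mem_closedBall_smul_add_smul_iff {t : ℝ} (ht : 0 ≤ t) (q x y : E) :
    q ∈ Metric.closedBall (t • x + (1 - t) • y) (t * ‖x - y‖) ↔
      ‖q - y‖ ^ 2 ≤ 2 * t * ⟪q - y, x - y⟫ := by
  have hq : q - (t • x + (1 - t) • y) = (q - y) - t • (x - y) := by module
  have hexp : ‖(q - y) - t • (x - y)‖ ^ 2
      = ‖q - y‖ ^ 2 - 2 * t * ⟪q - y, x - y⟫ + (t * ‖x - y‖) ^ 2 := by
    rw [norm_sub_sq_real, inner_smul_right, norm_smul, Real.norm_of_nonneg ht]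
    ring
  rw [Metric.mem_closedBall, dist_eq_norm, hq,
    ← pow_le_pow_iff_left₀ (norm_nonneg _) (by positivity) two_ne_zero, hexp]
  constructor <;> intro h <;> linarith

theorem eventually_mem_closedBall_smul_add_smul {q x y : E} (h : 0 < ⟪q - y, x - y⟫) :
    ∀ᶠ t in atTop, q ∈ Metric.closedBall (t • x + (1 - t) • y) (t * ‖x - y‖) := by
  filter_upwards [eventually_ge_atTop 0, eventually_ge_atTop (‖q - y‖ ^ 2 / (2 * ⟪q - y, x - y⟫))]
    with t ht₀ ht
  rw [mem_closedBall_smul_add_smul_iff ht₀]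
  rw [div_le_iff₀ (by positivity)] at ht
  linarith

end InnerProductSpace

theorem eventually_mem_beta_influence_of_mem_open_slab_general
    (q xi xj : EuclideanSpace ℝ (Fin 2))
    (h₁ : 0 < ⟪q - xi, xj - xi⟫) (h₂ : ⟪q - xi, xj - xi⟫ < ‖xj - xi‖ ^ 2) :
    ∃ β₀ : ℝ, ∀ β ≥ β₀,
      q ∈ Metric.closedBall ((β/2) • xi + (1 - β/2) • xj) ((β/2) * ‖xi - xj‖) ∩
          Metric.closedBall ((β/2) • xj + (1 - β/2) • xi) ((β/2) * ‖xi - xj‖) := by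
  have h₁' : 0 < ⟪q - xj, xi - xj⟫ := by
    linarith [inner_sub_sub_add_inner_sub_sub q xi xj]
  have hhalf : Tendsto (fun β : ℝ => β / 2) atTop atTop :=
    tendsto_id.atTop_div_const two_pos
  have hi := hhalf.eventually (eventually_mem_closedBall_smul_add_smul h₁')
  have hj := hhalf.eventually (eventually_mem_closedBall_smul_add_smul h₁)
  rw [norm_sub_rev xj xi] at hj
  exact eventually_atTop.1 (hi.and hj)

theorem eventually_mem_beta_influence_of_mem_open_slab
    (q xi xj : EuclideanSpace ℝ (Fin 2)) (hne : xi ≠ xj)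
    (h₁ : 0 < ⟪q - xi, xj - xi⟫) (h₂ : ⟪q - xi, xj - xi⟫ < ‖xj - xi‖ ^ 2)
    (hseg : q ∉ segment ℝ xi xj) :
    ∃ β₀ : ℝ, ∀ β ≥ β₀,
      q ∈ Metric.closedBall ((β/2) • xi + (1 - β/2) • xj) ((β/2) * ‖xi - xj‖) ∩
          Metric.closedBall ((β/2) • xj + (1 - β/2) • xi) ((β/2) * ‖xi - xj‖) :=
  eventually_mem_beta_influence_of_mem_open_slab_general q xi xj h₁ h₂
end

section
/- The total number of faces in the incremental arrangement of Gabriel circles over n ≥ 2 collinear points satisfies C_f(n) = (1/12)(n⁴ - 6n³ + 23n² - 30n + 24), where C_f(n) = 2 + Σ_{m=3}^{n} (1 + Σ_{k=2}^{m-1} f_k(m)) and f_k(m) = 2(1 + (k-1)(m-k-1)). -/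
open Finset

/- Both summation steps are proved by induction on the upper limit. For the inner sum, raising
`m` by one adds the new term `k = m`, equal to `2`, and increases every old term
`2 (1 + (k - 1)(m - k - 1))` by `2 (k - 1)`; these increments sum to `(m - 1)(m - 2)`. -/

theorem sum_Icc_eq_sum_Icc_pred_add {M : Type*} [AddCommMonoid M] (f : ℕ → M) {a m : ℕ}
    (ham : a ≤ m) (hm : 0 < m) :
    ∑ k ∈ Icc a m, f k = ∑ k ∈ Icc a (m - 1), f k + f m := by
  obtain ⟨m, rfl⟩ := Nat.exists_eq_add_of_lt hm
  simpa using sum_Icc_succ_top (by omega : a ≤ m + 1) f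

theorem sum_Icc_two_mul_sub_one (m : ℕ) (hm : 2 ≤ m) :
    ∑ k ∈ Icc 2 (m - 1), 2 * ((k : ℝ) - 1) = ((m : ℝ) - 1) * ((m : ℝ) - 2) := by
  induction m, hm using Nat.le_induction with
  | base => norm_num
  | succ m hm ih =>
    rw [Nat.add_sub_cancel, sum_Icc_eq_sum_Icc_pred_add _ (by omega) (by omega), ih]
    push_cast
    ring

theorem sum_Icc_faces (m : ℕ) (hm : 2 ≤ m) :
    ∑ k ∈ Icc 2 (m - 1), 2 * (1 + ((k : ℝ) - 1) * ((m : ℝ) - k - 1)) =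
      2 * ((m : ℝ) - 2) + ((m : ℝ) - 1) * ((m : ℝ) - 2) * ((m : ℝ) - 3) / 3 := by
  induction m, hm using Nat.le_induction with
  | base => norm_num
  | succ m hm ih =>
    have increment : ∀ k : ℕ, 2 * (1 + ((k : ℝ) - 1) * (((m + 1 : ℕ) : ℝ) - k - 1)) =
        2 * (1 + ((k : ℝ) - 1) * ((m : ℝ) - k - 1)) + 2 * ((k : ℝ) - 1) := by
      intro k
      push_cast
      ring
    rw [Nat.add_sub_cancel, sum_Icc_eq_sum_Icc_pred_add _ (by omega) (by omega)]
    simp only [increment, sum_add_distrib]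
    rw [ih, sum_Icc_two_mul_sub_one m hm]
    push_cast
    ring

theorem total_faces_closed_form (n : ℕ) (hn : 2 ≤ n) :
    (2 : ℝ) + ∑ m ∈ Finset.Icc 3 n,
        (1 + ∑ k ∈ Finset.Icc 2 (m - 1), 2 * (1 + ((k : ℝ) - 1) * ((m : ℝ) - k - 1))) =
      ((n : ℝ) ^ 4 - 6 * n ^ 3 + 23 * n ^ 2 - 30 * n + 24) / 12 := by
  induction n, hn using Nat.le_induction with
  | base => norm_num
  | succ n hn ih =>
    rw [sum_Icc_succ_top (by omega), ← add_assoc, ih, sum_Icc_faces (n + 1) (by omega)]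
    push_cast
    ring
end

section
/- The recurrence f_k(n) = f_k(n-1) + 2δ¹_{(k-1)(n-2)} for 2 ≤ k ≤ n-1, n ≥ 3, with f_k(k) = 0, where δ^1_{ij} = 1 if i = j, i if i < j, 0 otherwise, has closed-form solution f_k(n) = 2(1 + (k-1)(n-k-1)). -/
/-- δ^r_{ij} = r if i = j, i if i < j, 0 otherwise. -/
def deltaFn (r i j : ℤ) : ℤ := if i = j then r else if i < j then i else 0

theorem deltaFn_self (r i : ℤ) : deltaFn r i i = r := if_pos rfl

theorem deltaFn_of_lt (r : ℤ) {i j : ℤ} (h : i < j) : deltaFn r i j = i := by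
  simp [deltaFn, h, h.ne]

theorem faces_recurrence_closed_form
    (f : ℕ → ℕ → ℤ)
    (hbase : ∀ k : ℕ, 2 ≤ k → f k k = 0)
    (hrec : ∀ k n : ℕ, 2 ≤ k → k ≤ n - 1 → 3 ≤ n →
      f k n = f k (n - 1) + 2 * deltaFn 1 ((k : ℤ) - 1) ((n : ℤ) - 2)) :
    ∀ k n : ℕ, 2 ≤ k → k ≤ n - 1 → 3 ≤ n →
      f k n = 2 * (1 + ((k : ℤ) - 1) * ((n : ℤ) - k - 1)) := by
  intro k n hk hkn _
  have step : ∀ m, k ≤ m → f k (m + 1) = f k m + 2 * deltaFn 1 ((k : ℤ) - 1) ((m : ℤ) - 1) := by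
    intro m hkm
    have := hrec k (m + 1) hk (by omega) (by omega)
    rwa [Nat.add_sub_cancel, Nat.cast_succ, show (m : ℤ) + 1 - 2 = m - 1 by ring] at this
  induction n, (show k + 1 ≤ n by omega) using Nat.le_induction with
  | base =>
    rw [step k le_rfl, hbase k hk, deltaFn_self]
    push_cast
    ring
  | succ m hkm ih =>
    rw [step m (by omega), ih (by omega) (by omega), deltaFn_of_lt 1 (by omega)]
    push_cast
    ring
end

section
/- Let b_1, ..., b_n be positive reals and h > max_i b_i. Form the 2n planar points x_i = (b_i, 0) and x_{n+i} = (b_i, h) for 1 ≤ i ≤ n. If all b_i are distinct, then the number of ordered pairs (j, k), j ≠ k, such that the origin O lies in the slab S_∞(x_j, x_k), equals n(n+1); i.e., the unnormalized SkD_∞ of O equals n(n+1)/2 = C(n+1, 2). -/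
open scoped RealInnerProductSpace Classical

/-!
The origin lies in the slab of `a, c` iff `⟪a, c⟫ ≤ ‖a‖²` and `⟪a, c⟫ ≤ ‖c‖²`. For two points of
the same row this forces equal abscissae, so such pairs never count. For a lower point `(u, 0)`
and an upper point `(v, h)` the second inequality is automatic since `u < h`, and the first says
`v ≤ u`. So the pairs counted are the `(i, j)` with `b j ≤ b i` (lower, then upper) and those
with `b i ≤ b j` (upper, then lower); by injectivity of `b` exactly one of these holds when
`i ≠ j` and both when `i = j`, which gives `n² + n`.
-/

open Finset

section InnerProductSpace

variable {E : Type*} [NormedAddCommGroup E] [InnerProductSpace ℝ E]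

def slab (a c : E) : Set E :=
  {q | 0 ≤ ⟪q - a, c - a⟫ ∧ ⟪q - a, c - a⟫ ≤ ‖c - a‖ ^ 2}

lemma mem_slab_iff {a c q : E} :
    q ∈ slab a c ↔ 0 ≤ ⟪q - a, c - a⟫ ∧ ⟪q - a, c - a⟫ ≤ ‖c - a‖ ^ 2 :=
  Iff.rfl

lemma slab_comm (a c : E) : slab a c = slab c a := by
  ext q
  have key : ⟪q - c, a - c⟫ = ‖c - a‖ ^ 2 - ⟪q - a, c - a⟫ := by
    rw [show q - c = (q - a) - (c - a) by abel, show a - c = -(c - a) by abel,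
      inner_neg_right, inner_sub_left, real_inner_self_eq_norm_sq]
    ring
  simp only [mem_slab_iff, key, norm_sub_rev a c]
  constructor <;> rintro ⟨h₁, h₂⟩ <;> constructor <;> linarith

lemma zero_mem_slab_iff (a c : E) : 0 ∈ slab a c ↔ ⟪a, c⟫ ≤ ‖a‖ ^ 2 ∧ ⟪a, c⟫ ≤ ‖c‖ ^ 2 := by
  simp only [mem_slab_iff, zero_sub, inner_neg_left, inner_sub_right,
    real_inner_self_eq_norm_sq, norm_sub_sq_real, real_inner_comm a c]
  constructor <;> rintro ⟨h₁, h₂⟩ <;> constructor <;> linarith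

end InnerProductSpace

lemma inner_toLp_fin_two (u s v t : ℝ) : ⟪!₂[u, s], !₂[v, t]⟫ = u * v + s * t := by
  simp [PiLp.inner_apply, Fin.sum_univ_two, mul_comm]

lemma norm_sq_toLp_fin_two (u s : ℝ) : ‖!₂[u, s]‖ ^ 2 = u ^ 2 + s ^ 2 := by
  rw [← real_inner_self_eq_norm_sq, inner_toLp_fin_two, sq, sq]

lemma zero_mem_slab_same_row_iff {u v : ℝ} (hu : 0 < u) (hv : 0 < v) (t : ℝ) :
    0 ∈ slab !₂[u, t] !₂[v, t] ↔ u = v := by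
  rw [zero_mem_slab_iff, inner_toLp_fin_two, norm_sq_toLp_fin_two, norm_sq_toLp_fin_two]
  constructor
  · rintro ⟨h₁, h₂⟩
    exact le_antisymm (by nlinarith) (by nlinarith)
  · rintro rfl
    constructor <;> nlinarith

lemma zero_mem_slab_lower_upper_iff {u v h : ℝ} (hu : 0 < u) (huh : u ≤ h) :
    0 ∈ slab !₂[u, 0] !₂[v, h] ↔ v ≤ u := by
  rw [zero_mem_slab_iff, inner_toLp_fin_two, norm_sq_toLp_fin_two, norm_sq_toLp_fin_two]
  constructor
  · rintro ⟨h₁, -⟩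
    nlinarith
  · intro hvu
    constructor <;> nlinarith

lemma zero_mem_slab_upper_lower_iff {u v h : ℝ} (hv : 0 < v) (hvh : v ≤ h) :
    0 ∈ slab !₂[u, h] !₂[v, 0] ↔ u ≤ v := by
  rw [slab_comm, zero_mem_slab_lower_upper_iff hv hvh]

lemma Function.Injective.sum_ite_le_add_sum_ite_ge {α β : Type*} [Fintype α] [LinearOrder β]
    {b : α → β} (hb : Function.Injective b) :
    ((∑ i, ∑ j, if b j ≤ b i then 1 else 0) + ∑ i, ∑ j, if b i ≤ b j then 1 else 0) =
      Fintype.card α * (Fintype.card α + 1) := by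
  have hpair : ∀ i j, ((if b j ≤ b i then 1 else 0) + if b i ≤ b j then 1 else 0) =
      1 + if i = j then 1 else 0 := by
    intro i j
    rcases eq_or_ne i j with rfl | hij
    · simp
    · rcases (hb.ne hij).lt_or_gt with hlt | hlt <;> simp [hij, hlt.le, hlt.not_ge]
  simp_rw [← sum_add_distrib, hpair]
  simp only [sum_add_distrib, sum_ite_eq, mem_univ, if_true, sum_const, card_univ, smul_eq_mul,
    mul_one]
  ring

lemma card_filter_offDiag_univ {α : Type*} [Fintype α] [DecidableEq α] (p : α × α → Prop)
    [DecidablePred p] :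
    #(univ.offDiag.filter p) = ∑ s, ∑ t, if s ≠ t ∧ p (s, t) then 1 else 0 := by
  have : univ.offDiag.filter p = univ.filter (fun q : α × α => q.1 ≠ q.2 ∧ p q) := by
    ext; simp
  rw [this, card_filter, Fintype.sum_prod_type]

theorem slab_depth_of_origin_for_two_rows
    (n : ℕ) (b : Fin n → ℝ) (hpos : ∀ i, 0 < b i) (hinj : Function.Injective b)
    (h : ℝ) (hh : ∀ i, b i < h)
    (x : Fin n ⊕ Fin n → EuclideanSpace ℝ (Fin 2))
    (hx₁ : ∀ i, x (Sum.inl i) = (WithLp.equiv 2 (Fin 2 → ℝ)).symm ![b i, 0])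
    (hx₂ : ∀ i, x (Sum.inr i) = (WithLp.equiv 2 (Fin 2 → ℝ)).symm ![b i, h]) :
    (Finset.univ.offDiag.filter
        (fun p : (Fin n ⊕ Fin n) × (Fin n ⊕ Fin n) =>
          0 ≤ ⟪(0 : EuclideanSpace ℝ (Fin 2)) - x p.1, x p.2 - x p.1⟫ ∧
            ⟪(0 : EuclideanSpace ℝ (Fin 2)) - x p.1, x p.2 - x p.1⟫ ≤
              ‖x p.2 - x p.1‖ ^ 2)).card = n * (n + 1) := by
  simp only [← mem_slab_iff]
  have same_row : ∀ i j t, 0 ∈ slab !₂[b i, t] !₂[b j, t] ↔ i = j := fun i j t =>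
    (zero_mem_slab_same_row_iff (hpos i) (hpos j) t).trans hinj.eq_iff
  rw [card_filter_offDiag_univ]
  simp only [Fintype.sum_sum_type, hx₁, hx₂, WithLp.equiv_symm_apply, same_row, ne_eq,
    Sum.inl.injEq, Sum.inr.injEq, reduceCtorEq, not_false_eq_true, true_and,
    not_and_self, if_false, sum_const_zero, zero_add, add_zero,
    zero_mem_slab_lower_upper_iff (hpos _) (hh _).le,
    zero_mem_slab_upper_lower_iff (hpos _) (hh _).le]
  simpa only [Fintype.card_fin] using hinj.sum_ite_le_add_sum_ite_ge
end
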